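/- Let Y_1, …, Y_N be independent real random variables on a probability space, where Y_i is distributed according to the Laplace measure with location 0 and scale b_i > 0. Let B = Σ_i b_i² and let ω ∈ (0, e^{−2}] satisfy ln(1/ω) · max_i b_i ≤ √B. Then P(|Σ_{i=1}^N Y_i| ≥ ln(1/ω)·√(8B)) ≤ ω. -/

import Mathlib

/-!
Chernoff's method. For `(t b)² ≤ 1/2` the moment generating function of `Laplace(0, b)` is
`(1 - t² b²)⁻¹ ≤ exp (2 t² b²)`, so by independence the sum `S` has
`mgf S (±t) ≤ exp (2 t² B)` and `P(|S| ≥ ε) ≤ 2 exp (-t ε + 2 t² B)`. The choice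
`t = ε / (4B)` gives `2 exp (-ε² / (8B))`, which for `ε = ln(1/ω) √(8B)` is
`2 ω^(ln(1/ω)) ≤ ω` since `ln(1/ω) ≥ 2`; the hypothesis on `max b i` is exactly what makes
this `t` admissible.
-/

open MeasureTheory ProbabilityTheory

/-- The Laplace density with location `μ` and scale `b`. -/
noncomputable def laplaceDensity (μ b : ℝ) (x : ℝ) : ℝ :=
  (1 / (2 * b)) * Real.exp (-|x - μ| / b)

/-- The Laplace measure with location `μ` and scale `b`: the measure on `ℝ` whose density
with respect to Lebesgue measure is the Laplace density. -/
noncomputable def laplaceMeasure (μ b : ℝ) : Measure ℝ :=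
  volume.withDensity (fun x => ENNReal.ofReal (laplaceDensity μ b x))

open Real Set

lemma measurable_laplaceDensity (μ b : ℝ) : Measurable (laplaceDensity μ b) := by
  unfold laplaceDensity
  fun_prop

section LaplaceMeasure

variable {b t : ℝ}

lemma laplaceDensity_nonneg (μ : ℝ) (hb : 0 ≤ b) (x : ℝ) : 0 ≤ laplaceDensity μ b x := by
  unfold laplaceDensity
  positivity

lemma laplaceDensity_zero_mul_exp_of_nonpos {x : ℝ} (hx : x ≤ 0) :
    laplaceDensity 0 b x * exp (t * x) = (2 * b)⁻¹ * exp ((b⁻¹ + t) * x) := by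
  rw [laplaceDensity, sub_zero, abs_of_nonpos hx, mul_assoc, ← exp_add, one_div]
  ring_nf

lemma laplaceDensity_zero_mul_exp_of_nonneg {x : ℝ} (hx : 0 ≤ x) :
    laplaceDensity 0 b x * exp (t * x) = (2 * b)⁻¹ * exp ((t - b⁻¹) * x) := by
  rw [laplaceDensity, sub_zero, abs_of_nonneg hx, mul_assoc, ← exp_add, one_div]
  ring_nf

lemma integral_laplaceDensity_zero_mul_exp (hb : 0 < b) (ht : |t| < b⁻¹) :
    ∫ x, laplaceDensity 0 b x * exp (t * x) = (1 - t ^ 2 * b ^ 2)⁻¹ := by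
  obtain ⟨hlo, hhi⟩ := abs_lt.mp ht
  have hleft : IntegrableOn (fun x ↦ laplaceDensity 0 b x * exp (t * x)) (Iic 0) :=
    IntegrableOn.congr_fun
      ((integrableOn_exp_mul_Iic (a := b⁻¹ + t) (by linarith) 0).const_mul _)
      (fun x hx ↦ (laplaceDensity_zero_mul_exp_of_nonpos hx).symm) measurableSet_Iic
  have hright : IntegrableOn (fun x ↦ laplaceDensity 0 b x * exp (t * x)) (Ioi 0) :=
    IntegrableOn.congr_fun
      ((integrableOn_exp_mul_Ioi (a := t - b⁻¹) (by linarith) 0).const_mul _)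
      (fun x hx ↦ (laplaceDensity_zero_mul_exp_of_nonneg (le_of_lt hx)).symm) measurableSet_Ioi
  rw [← intervalIntegral.integral_Iic_add_Ioi hleft hright,
    setIntegral_congr_fun measurableSet_Iic fun x hx ↦ laplaceDensity_zero_mul_exp_of_nonpos hx,
    setIntegral_congr_fun measurableSet_Ioi
      fun x hx ↦ laplaceDensity_zero_mul_exp_of_nonneg (le_of_lt hx),
    integral_const_mul, integral_const_mul, integral_exp_mul_Iic (by linarith),
    integral_exp_mul_Ioi (by linarith)]
  simp only [mul_zero, exp_zero]
  have hbt₁ : 0 < 1 - b * t := by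
    rw [sub_pos, mul_comm, ← lt_div_iff₀ hb, one_div]
    exact hhi
  have hbt₂ : 0 < 1 + b * t := by
    rw [← neg_lt_iff_pos_add', mul_comm, ← div_lt_iff₀ hb, neg_div, one_div]
    exact hlo
  rw [show 1 - t ^ 2 * b ^ 2 = (1 - b * t) * (1 + b * t) by ring,
    show b⁻¹ + t = (1 + b * t) / b by field_simp,
    show t - b⁻¹ = -((1 - b * t) / b) by field_simp; ring]
  field_simp
  ring

lemma mgf_id_laplaceMeasure (hb : 0 < b) (ht : |t| < b⁻¹) :
    mgf id (laplaceMeasure 0 b) t = (1 - t ^ 2 * b ^ 2)⁻¹ := by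
  rw [mgf, laplaceMeasure, integral_withDensity_eq_integral_toReal_smul
    (measurable_laplaceDensity 0 b).ennreal_ofReal
    (ae_of_all _ fun _ ↦ ENNReal.ofReal_lt_top),
    ← integral_laplaceDensity_zero_mul_exp hb ht]
  simp [ENNReal.toReal_ofReal (laplaceDensity_nonneg 0 hb.le _)]

lemma laplaceMeasure_ne_zero (hb : 0 < b) : laplaceMeasure 0 b ≠ 0 := by
  intro h
  simpa [h] using mgf_id_laplaceMeasure hb (t := 0) (by simpa using hb)

lemma mgf_of_map_eq_laplaceMeasure {Ω : Type*} [MeasurableSpace Ω] {P : Measure Ω}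
    {X : Ω → ℝ} (hX : P.map X = laplaceMeasure 0 b) (hb : 0 < b) (ht : |t| < b⁻¹) :
    mgf X P t = (1 - t ^ 2 * b ^ 2)⁻¹ := by
  rw [← mgf_id_map (.of_map_ne_zero (hX ▸ laplaceMeasure_ne_zero hb)), hX,
    mgf_id_laplaceMeasure hb ht]

end LaplaceMeasure

lemma inv_one_sub_le_exp_two_mul {x : ℝ} (h₀ : 0 ≤ x) (h₁ : x ≤ 1 / 2) :
    (1 - x)⁻¹ ≤ exp (2 * x) := by
  rw [inv_le_iff_one_le_mul₀' (by linarith)]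
  nlinarith [add_one_le_exp (2 * x), exp_pos (2 * x)]

lemma two_mul_exp_neg_sq_le_exp_neg {L : ℝ} (hL : 2 ≤ L) : 2 * exp (-L ^ 2) ≤ exp (-L) := by
  have h : 2 ≤ exp (L ^ 2 - L) := by nlinarith [add_one_le_exp (L ^ 2 - L)]
  calc 2 * exp (-L ^ 2) ≤ exp (L ^ 2 - L) * exp (-L ^ 2) := by gcongr
    _ = exp (-L) := by rw [← exp_add]; ring_nf

section Chernoff

variable {Ω : Type*} [MeasurableSpace Ω] {μ : Measure Ω} {X : Ω → ℝ} {t : ℝ}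

theorem measureReal_abs_ge_le_exp_mul_mgf [IsFiniteMeasure μ] (ε : ℝ) (ht : 0 ≤ t)
    (h_int : Integrable (fun ω ↦ exp (t * X ω)) μ)
    (h_int_neg : Integrable (fun ω ↦ exp (-t * X ω)) μ) :
    μ.real {ω | ε ≤ |X ω|} ≤ exp (-t * ε) * (mgf X μ t + mgf X μ (-t)) := by
  have hsub : {ω | ε ≤ |X ω|} ⊆ {ω | ε ≤ X ω} ∪ {ω | X ω ≤ -ε} :=
    fun ω (hω : ε ≤ |X ω|) ↦ by
    rcases le_abs'.mp hω with h | h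
    exacts [Or.inr h, Or.inl h]
  calc μ.real {ω | ε ≤ |X ω|} ≤ μ.real {ω | ε ≤ X ω} + μ.real {ω | X ω ≤ -ε} :=
        (measureReal_mono hsub).trans (measureReal_union_le _ _)
    _ ≤ exp (-t * ε) * mgf X μ t + exp (- -t * -ε) * mgf X μ (-t) :=
        add_le_add (measure_ge_le_exp_mul_mgf ε ht h_int)
          (measure_le_le_exp_mul_mgf (-ε) (neg_nonpos.mpr ht) h_int_neg)
    _ = exp (-t * ε) * (mgf X μ t + mgf X μ (-t)) := by ring_nf

end Chernoff

section LaplaceSum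

variable {Ω ι : Type*} [MeasurableSpace Ω] [Fintype ι] {P : Measure Ω} {Y : ι → Ω → ℝ}
  {b : ι → ℝ}

lemma mgf_sum_laplace_le (hb : ∀ i, 0 < b i) (hindep : iIndepFun Y P)
    (hlaw : ∀ i, P.map (Y i) = laplaceMeasure 0 (b i)) {t : ℝ}
    (htb : ∀ i, (t * b i) ^ 2 ≤ 1 / 2) :
    0 < mgf (∑ i, Y i) P t ∧ mgf (∑ i, Y i) P t ≤ exp (2 * t ^ 2 * ∑ i, b i ^ 2) := by
  have hmeas i : AEMeasurable (Y i) P :=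
    .of_map_ne_zero ((hlaw i).symm ▸ laplaceMeasure_ne_zero (hb i))
  have hfactor i : mgf (Y i) P t = (1 - (t * b i) ^ 2)⁻¹ := by
    have hsq : |t * b i| < 1 := (sq_lt_one_iff_abs_lt_one _).mp (by linarith [htb i])
    rw [abs_mul, abs_of_pos (hb i), ← lt_div_iff₀ (hb i), one_div] at hsq
    rw [mgf_of_map_eq_laplaceMeasure (hlaw i) (hb i) hsq, mul_pow]
  rw [hindep.mgf_sum₀ hmeas, Finset.mul_sum, exp_sum]
  simp only [hfactor]
  refine ⟨Finset.prod_pos fun i _ ↦ ?_, Finset.prod_le_prod (fun i _ ↦ ?_) fun i _ ↦ ?_⟩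
  · exact inv_pos.mpr (by linarith [htb i])
  · exact (inv_pos.mpr (by linarith [htb i])).le
  · rw [mul_assoc, ← mul_pow]
    exact inv_one_sub_le_exp_two_mul (sq_nonneg _) (htb i)

theorem measureReal_abs_sum_ge_le_of_laplace [IsProbabilityMeasure P]
    (hb : ∀ i, 0 < b i) (hindep : iIndepFun Y P)
    (hlaw : ∀ i, P.map (Y i) = laplaceMeasure 0 (b i)) {t : ℝ} (ht : 0 ≤ t)
    (htb : ∀ i, (t * b i) ^ 2 ≤ 1 / 2) (ε : ℝ) :
    P.real {ω | ε ≤ |∑ i, Y i ω|} ≤ 2 * exp (-t * ε + 2 * t ^ 2 * ∑ i, b i ^ 2) := by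
  obtain ⟨hpos, hle⟩ := mgf_sum_laplace_le hb hindep hlaw htb
  obtain ⟨hpos_neg, hle_neg⟩ := mgf_sum_laplace_le hb hindep hlaw (t := -t) (by simpa using htb)
  -- `mgf` is `0` off integrability, so its positivity gives the integrability Chernoff needs
  have key := measureReal_abs_ge_le_exp_mul_mgf (X := ∑ i, Y i) ε ht
    (mgf_pos_iff.mp hpos) (mgf_pos_iff.mp hpos_neg)
  simp only [Finset.sum_apply, neg_sq] at key hle_neg
  calc _ ≤ _ := key
    _ ≤ exp (-t * ε) * (2 * exp (2 * t ^ 2 * ∑ i, b i ^ 2)) := by gcongr; linarith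
    _ = _ := by rw [exp_add]; ring

theorem measureReal_abs_sum_ge_le_two_mul_exp_of_laplace [IsProbabilityMeasure P]
    (hb : ∀ i, 0 < b i) (hindep : iIndepFun Y P)
    (hlaw : ∀ i, P.map (Y i) = laplaceMeasure 0 (b i)) {ε : ℝ} (hε : 0 ≤ ε)
    (hεb : ∀ i, (ε * b i) ^ 2 ≤ 8 * (∑ j, b j ^ 2) ^ 2) :
    P.real {ω | ε ≤ |∑ i, Y i ω|} ≤ 2 * exp (-(ε ^ 2 / (8 * ∑ i, b i ^ 2))) := by
  set B := ∑ i, b i ^ 2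
  rcases eq_or_ne B 0 with hB | hB
  · rw [hB, mul_zero, div_zero, neg_zero, exp_zero, mul_one]
    exact measureReal_le_one.trans one_le_two
  have htb i : (ε / (4 * B) * b i) ^ 2 ≤ 1 / 2 := by
    rw [div_mul_eq_mul_div, div_pow, div_le_iff₀ (by positivity)]
    linarith [hεb i]
  convert measureReal_abs_sum_ge_le_of_laplace hb hindep hlaw (by positivity) htb ε using 3
  field_simp
  ring

end LaplaceSum

/-- Concentration of sums of independent centered Laplace random variables:
if `Y i ∼ Laplace(0, b i)`, `B = Σ b i²`, and `ω ∈ (0, e⁻²]` satisfies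
`ln(1/ω) · max_i b i ≤ √B`, then `P(|Σ Y i| ≥ ln(1/ω) √(8B)) ≤ ω`. -/
theorem laplace_sum_concentration {Ω : Type*} [MeasurableSpace Ω]
    (P : Measure Ω) [IsProbabilityMeasure P]
    (N : ℕ) (hN : 0 < N) (Y : Fin N → Ω → ℝ) (b : Fin N → ℝ) (hb : ∀ i, 0 < b i)
    (hindep : iIndepFun Y P)
    (hlaw : ∀ i, P.map (Y i) = laplaceMeasure 0 (b i))
    (B : ℝ) (hB : B = ∑ i, (b i) ^ 2)
    (ω : ℝ) (hω : 0 < ω) (hω' : ω ≤ Real.exp (-2))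
    (hmax : Real.log (1 / ω) *
        Finset.univ.sup' (Finset.univ_nonempty_iff.mpr (Fin.pos_iff_nonempty.mp hN)) b
      ≤ Real.sqrt B) :
    P {x | Real.log (1 / ω) * Real.sqrt (8 * B) ≤ |∑ i, Y i x|} ≤ ENNReal.ofReal ω := by
  set L := log (1 / ω) with hLdef
  have hωL : exp (-L) = ω := by rw [hLdef, one_div, log_inv, neg_neg, exp_log hω]
  have hL : 2 ≤ L := by
    rw [hLdef, one_div, log_inv, le_neg]
    exact (log_le_iff_le_exp hω).mpr hω'
  have hL0 : 0 ≤ L := by linarith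
  have hBpos : 0 < B := hB ▸ Finset.sum_pos (fun i _ ↦ pow_pos (hb i) 2)
    (Finset.univ_nonempty_iff.mpr (Fin.pos_iff_nonempty.mp hN))
  have hsqrt8 : √(8 * B) ^ 2 = 8 * B := sq_sqrt (by positivity)
  have hεb i : (L * √(8 * B) * b i) ^ 2 ≤ 8 * (∑ j, b j ^ 2) ^ 2 := by
    have hLb : L * b i ≤ √B := (mul_le_mul_of_nonneg_left (Finset.le_sup' b (Finset.mem_univ i))
      hL0).trans hmax
    have hLb2 : (L * b i) ^ 2 ≤ B := by
      simpa [sq_sqrt hBpos.le] using pow_le_pow_left₀ (mul_nonneg hL0 (hb i).le) hLb 2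
    rw [← hB, mul_right_comm, mul_pow, hsqrt8]
    nlinarith
  have htail := measureReal_abs_sum_ge_le_two_mul_exp_of_laplace hb hindep hlaw
    (mul_nonneg hL0 (sqrt_nonneg _)) hεb
  rw [← hB, mul_pow, hsqrt8, mul_div_assoc, div_self (by positivity), mul_one] at htail
  calc P {x | L * √(8 * B) ≤ |∑ i, Y i x|}
      = ENNReal.ofReal (P.real {x | L * √(8 * B) ≤ |∑ i, Y i x|}) := (ofReal_measureReal).symm
    _ ≤ ENNReal.ofReal (exp (-L)) :=
        ENNReal.ofReal_le_ofReal (htail.trans (two_mul_exp_neg_sq_le_exp_neg hL))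
    _ = ENNReal.ofReal ω := by rw [hωL]
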